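/- arXiv:1607.03022 — 5 statements merged into one kernel-verified Lean document; each statement's English description precedes it below -/
import Mathlib

section
/- Let V be a real normed vector space, A a continuous linear operator on V, and a > 0 with ‖exp(tA) v‖ ≤ exp(-a t) ‖v‖ for all t ≥ 0, v ∈ V. Then for every nonzero v ∈ V there exists a unique τ ∈ ℝ such that ‖exp(τ A) v‖ = 1. -/
/-!
The semigroup law turns the estimate into `g (s + t) ≤ e^{-a t} g s` for `g t = ‖exp (t • A) v‖`,
and `g` never vanishes because `exp (t • A)` is invertible. Hence `log ∘ g` is continuous and
decreases at least linearly with slope `a`: it is strictly decreasing and runs from `+∞` to `-∞`,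
so it takes the value `0` exactly once.
-/

open NormedSpace Filter

theorem Continuous.bijective_of_le_sub_mul {f : ℝ → ℝ} (hf : Continuous f) {a : ℝ} (ha : 0 < a)
    (hdecay : ∀ s t, 0 ≤ t → f (s + t) ≤ f s - a * t) : Function.Bijective f := by
  have hanti : StrictAnti f := fun s u hsu => by
    have := hdecay s (u - s) (sub_nonneg.2 hsu.le)
    rw [add_sub_cancel] at this
    nlinarith
  refine ⟨hanti.injective, hf.surjective' ?_ ?_⟩
  · refine tendsto_atTop_mono' atBot ?_ (tendsto_atTop_add_const_left _ (f 0)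
      (tendsto_id.const_mul_atBot_of_neg (neg_neg_of_pos ha)))
    filter_upwards [eventually_le_atBot 0] with t ht
    have := hdecay t (-t) (neg_nonneg.2 ht)
    rw [add_neg_cancel] at this
    simp only [id]
    linarith
  · refine tendsto_atBot_mono' atTop ?_ (tendsto_atBot_add_const_left _ (f 0)
      (tendsto_id.const_mul_atTop_of_neg (neg_neg_of_pos ha)))
    filter_upwards [eventually_ge_atTop 0] with t ht
    simpa [sub_eq_add_neg] using hdecay 0 t ht

theorem Continuous.existsUnique_eq_of_le_exp_neg_mul {g : ℝ → ℝ} (hg : Continuous g)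
    (hpos : ∀ t, 0 < g t) {a : ℝ} (ha : 0 < a)
    (hdecay : ∀ s t, 0 ≤ t → g (s + t) ≤ Real.exp (-a * t) * g s) {c : ℝ} (hc : 0 < c) :
    ∃! τ, g τ = c := by
  have hlog : ∀ s t, 0 ≤ t → Real.log (g (s + t)) ≤ Real.log (g s) - a * t := fun s t ht =>
    calc Real.log (g (s + t)) ≤ Real.log (Real.exp (-a * t) * g s) :=
          Real.log_le_log (hpos _) (hdecay s t ht)
      _ = Real.log (g s) - a * t := by
          rw [Real.log_mul (Real.exp_pos _).ne' (hpos s).ne', Real.log_exp]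
          ring
  have hbij := (hg.log fun t => (hpos t).ne').bijective_of_le_sub_mul ha hlog
  simpa only [Real.log_injOn_pos.eq_iff (hpos _) hc] using hbij.existsUnique (Real.log c)

section BanachAlgebra

variable {𝔸 : Type*} [NormedRing 𝔸] [NormedAlgebra ℝ 𝔸] [CompleteSpace 𝔸]

theorem NormedSpace.exp_add_smul (x : 𝔸) (s t : ℝ) :
    exp ((s + t) • x) = exp (s • x) * exp (t • x) := by
  let +nondep : NormedAlgebra ℚ 𝔸 := .restrictScalars ℚ ℝ 𝔸
  rw [add_smul]
  exact exp_add_of_commute (((Commute.refl x).smul_left s).smul_right t)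

theorem NormedSpace.exp_neg_smul_mul_exp_smul (x : 𝔸) (t : ℝ) :
    exp (-t • x) * exp (t • x) = 1 := by
  rw [← exp_add_smul, neg_add_cancel, zero_smul, exp_zero]

end BanachAlgebra

section Operator

variable {V : Type*} [NormedAddCommGroup V] [NormedSpace ℝ V] [CompleteSpace V]

theorem norm_exp_smul_apply_pos (A : V →L[ℝ] V) (t : ℝ) {v : V} (hv : v ≠ 0) :
    0 < ‖exp (t • A) v‖ := by
  refine norm_pos_iff.2 fun h => hv ?_
  simpa [h] using congr($(exp_neg_smul_mul_exp_smul A t) v).symm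

theorem continuous_exp_smul_apply (A : V →L[ℝ] V) (v : V) :
    Continuous fun t : ℝ => exp (t • A) v :=
  (differentiable_exp_smul_const ℝ A).continuous.clm_apply continuous_const

end Operator

/-- Under the hyperbolicity estimate, every nonzero vector crosses the unit sphere
at a unique time. -/
theorem stmt1 {V : Type*} [NormedAddCommGroup V] [NormedSpace ℝ V] [CompleteSpace V]
    (A : V →L[ℝ] V) (a : ℝ) (ha : 0 < a)
    (hyp : ∀ t : ℝ, 0 ≤ t → ∀ v : V, ‖exp (t • A) v‖ ≤ Real.exp (-a * t) * ‖v‖) :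
    ∀ v : V, v ≠ 0 → ∃! τ : ℝ, ‖exp (τ • A) v‖ = 1 := by
  intro v hv
  refine (continuous_exp_smul_apply A v).norm.existsUnique_eq_of_le_exp_neg_mul
    (fun t => norm_exp_smul_apply_pos A t hv) ha (fun s t ht => ?_) one_pos
  rw [add_comm, exp_add_smul A t s]
  exact hyp t ht _
end

section
/- Let V be a real normed vector space and A, B continuous linear operators such that there exist a, b > 0 with ‖exp(tA) v‖ ≤ exp(-a t)‖v‖ and ‖exp(tB) v‖ ≤ exp(-b t)‖v‖ for all t ≥ 0 and v ∈ V. Then the flows (t, v) ↦ exp(tA) v and (t, v) ↦ exp(tB) v are topologically conjugate: there is a homeomorphism ψ : V → V with ψ(exp(tA) v) = exp(tB) ψ(v) for all t ∈ ℝ, v ∈ V. -/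
/-!
For a contracting linear flow the norm of every nonzero orbit is strictly decreasing, tends to `0`
in forward time and to `∞` in backward time, so each orbit crosses the unit sphere at exactly one
time `τ v`, which depends continuously on `v ≠ 0`. The map `ψ v = exp (-τ v • B) (exp (τ v • A) v)`
slides `v` along its `A`-orbit to the unit sphere and back out along the `B`-orbit for the same
time. It intertwines the flows because `τ` shifts by `-t` along `A`-orbits, its inverse is the map
built with `A` and `B` swapped, and it is continuous at `0` because `τ v → -∞` as `v → 0`, whence
`‖ψ v‖ ≤ exp (b τ v) → 0`.
-/

open NormedSpace Filter Topology

section LinearFlow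

variable {V : Type*} [NormedAddCommGroup V] [NormedSpace ℝ V]

def IsContracting (A : V →L[ℝ] V) (a : ℝ) : Prop :=
  ∀ t : ℝ, 0 ≤ t → ∀ v : V, ‖exp (t • A) v‖ ≤ Real.exp (-a * t) * ‖v‖

noncomputable def unitTime (A : V →L[ℝ] V) (v : V) : ℝ :=
  Classical.epsilon fun t => ‖exp (t • A) v‖ = 1

/-- At `v = 0` the time `unitTime A 0` is a junk value, but both exponentials fix `0`. -/
noncomputable def flowConjugacy (A B : V →L[ℝ] V) (v : V) : V :=
  exp ((-unitTime A v) • B) (exp (unitTime A v • A) v)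

@[simp]
theorem flowConjugacy_zero (A B : V →L[ℝ] V) : flowConjugacy A B 0 = 0 := by
  simp only [flowConjugacy, map_zero]

variable [CompleteSpace V]

theorem exp_add_smul_apply (A : V →L[ℝ] V) (s t : ℝ) (v : V) :
    exp ((s + t) • A) v = exp (s • A) (exp (t • A) v) := by
  let +nondep : NormedAlgebra ℚ (V →L[ℝ] V) := .restrictScalars ℚ ℝ _
  rw [add_smul, exp_add_of_commute (((Commute.refl A).smul_left s).smul_right t)]
  rfl

theorem exp_neg_smul_apply_exp_smul_apply (A : V →L[ℝ] V) (t : ℝ) (v : V) :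
    exp ((-t) • A) (exp (t • A) v) = v := by
  rw [← exp_add_smul_apply, neg_add_cancel, zero_smul, exp_zero, one_apply_eq_self]

theorem exp_smul_apply_exp_neg_smul_apply (A : V →L[ℝ] V) (t : ℝ) (v : V) :
    exp (t • A) (exp ((-t) • A) v) = v := by
  simpa using exp_neg_smul_apply_exp_smul_apply A (-t) v

theorem exp_smul_apply_ne_zero (A : V →L[ℝ] V) (t : ℝ) {v : V} (hv : v ≠ 0) :
    exp (t • A) v ≠ 0 := fun h => hv <| by
  rw [← exp_neg_smul_apply_exp_smul_apply A t v, h, map_zero]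

theorem continuous_exp_smul (A : V →L[ℝ] V) : Continuous fun t : ℝ => exp (t • A) := by
  let +nondep : NormedAlgebra ℚ (V →L[ℝ] V) := .restrictScalars ℚ ℝ _
  exact exp_continuous.comp (continuous_id.smul continuous_const)

namespace IsContracting

variable {A B : V →L[ℝ] V} {a b : ℝ}

theorem strictAnti_norm (hA : IsContracting A a) (ha : 0 < a) {v : V} (hv : v ≠ 0) :
    StrictAnti fun t : ℝ => ‖exp (t • A) v‖ := by
  intro s t hst
  have hpos : 0 < ‖exp (s • A) v‖ := norm_pos_iff.2 (exp_smul_apply_ne_zero A s hv)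
  calc ‖exp (t • A) v‖ = ‖exp ((t - s) • A) (exp (s • A) v)‖ := by
        rw [← exp_add_smul_apply, sub_add_cancel]
    _ ≤ Real.exp (-a * (t - s)) * ‖exp (s • A) v‖ := hA _ (sub_nonneg.2 hst.le) _
    _ < ‖exp (s • A) v‖ :=
        mul_lt_of_lt_one_left hpos (Real.exp_lt_one_iff.2 (by nlinarith))

theorem le_norm_of_nonpos (hA : IsContracting A a) {t : ℝ} (ht : t ≤ 0) (v : V) :
    Real.exp (-a * t) * ‖v‖ ≤ ‖exp (t • A) v‖ := by
  have h := hA (-t) (neg_nonneg.2 ht) (exp (t • A) v)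
  rw [exp_neg_smul_apply_exp_smul_apply] at h
  calc Real.exp (-a * t) * ‖v‖
      ≤ Real.exp (-a * t) * (Real.exp (-a * -t) * ‖exp (t • A) v‖) := by gcongr
    _ = ‖exp (t • A) v‖ := by
        rw [← mul_assoc, ← Real.exp_add, show -a * t + -a * -t = 0 by ring, Real.exp_zero,
          one_mul]

theorem exists_norm_eq_one (hA : IsContracting A a) (ha : 0 < a) {v : V} (hv : v ≠ 0) :
    ∃ t : ℝ, ‖exp (t • A) v‖ = 1 := by
  set L := Real.log ‖v‖
  have hvL : ‖v‖ = Real.exp L := (Real.exp_log (norm_pos_iff.2 hv)).symm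
  set T := |L| / a
  have haT : a * T = |L| := mul_div_cancel₀ _ ha.ne'
  have hT : 0 ≤ T := by positivity
  have hforward : ‖exp (T • A) v‖ ≤ 1 := calc
    ‖exp (T • A) v‖ ≤ Real.exp (-a * T) * ‖v‖ := hA T hT v
    _ = Real.exp (L - |L|) := by rw [hvL, ← Real.exp_add]; congr 1; linarith
    _ ≤ 1 := Real.exp_le_one_iff.2 (sub_nonpos.2 (le_abs_self L))
  have hbackward : 1 ≤ ‖exp ((-T) • A) v‖ := calc
    1 ≤ Real.exp (L + |L|) := Real.one_le_exp_iff.2 (by linarith [neg_abs_le L])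
    _ = Real.exp (-a * -T) * ‖v‖ := by rw [hvL, ← Real.exp_add]; congr 1; linarith
    _ ≤ ‖exp ((-T) • A) v‖ := hA.le_norm_of_nonpos (neg_nonpos.2 hT) v
  exact intermediate_value_univ T (-T)
    ((continuous_exp_smul A).clm_apply continuous_const).norm ⟨hforward, hbackward⟩

theorem norm_exp_unitTime_smul_apply (hA : IsContracting A a) (ha : 0 < a) {v : V}
    (hv : v ≠ 0) : ‖exp (unitTime A v • A) v‖ = 1 :=
  Classical.epsilon_spec (hA.exists_norm_eq_one ha hv)

theorem unitTime_lt_iff (hA : IsContracting A a) (ha : 0 < a) {v : V} (hv : v ≠ 0) {s : ℝ} :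
    unitTime A v < s ↔ ‖exp (s • A) v‖ < 1 := by
  rw [← hA.norm_exp_unitTime_smul_apply ha hv]
  exact (hA.strictAnti_norm ha hv).lt_iff_gt.symm

theorem lt_unitTime_iff (hA : IsContracting A a) (ha : 0 < a) {v : V} (hv : v ≠ 0) {s : ℝ} :
    s < unitTime A v ↔ 1 < ‖exp (s • A) v‖ := by
  rw [← hA.norm_exp_unitTime_smul_apply ha hv]
  exact (hA.strictAnti_norm ha hv).lt_iff_gt.symm

theorem unitTime_eq (hA : IsContracting A a) (ha : 0 < a) {v : V} (hv : v ≠ 0) {s : ℝ}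
    (hs : ‖exp (s • A) v‖ = 1) : unitTime A v = s :=
  (hA.strictAnti_norm ha hv).injective <| by
    rw [hA.norm_exp_unitTime_smul_apply ha hv, hs]

theorem unitTime_exp_smul_apply (hA : IsContracting A a) (ha : 0 < a) {v : V} (hv : v ≠ 0)
    (s : ℝ) : unitTime A (exp (s • A) v) = unitTime A v - s := by
  refine hA.unitTime_eq ha (exp_smul_apply_ne_zero A s hv) ?_
  rw [← exp_add_smul_apply, sub_add_cancel, hA.norm_exp_unitTime_smul_apply ha hv]

theorem continuousAt_unitTime (hA : IsContracting A a) (ha : 0 < a) {v : V} (hv : v ≠ 0) :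
    ContinuousAt (unitTime A) v := by
  have hnorm (s : ℝ) : ContinuousAt (fun w : V => ‖exp (s • A) w‖) v :=
    (exp (s • A)).continuous.norm.continuousAt
  refine tendsto_order.2 ⟨fun s hs => ?_, fun s hs => ?_⟩
  · filter_upwards [eventually_ne_nhds hv,
      continuousAt_const.eventually_lt (hnorm s) ((hA.lt_unitTime_iff ha hv).1 hs)] with w hw h
    exact (hA.lt_unitTime_iff ha hw).2 h
  · filter_upwards [eventually_ne_nhds hv,
      (hnorm s).eventually_lt continuousAt_const ((hA.unitTime_lt_iff ha hv).1 hs)] with w hw h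
    exact (hA.unitTime_lt_iff ha hw).2 h

theorem tendsto_unitTime_nhdsNE_zero (hA : IsContracting A a) (ha : 0 < a) :
    Tendsto (unitTime A) (𝓝[≠] 0) atBot := by
  refine tendsto_atBot.2 fun s => ?_
  have hsmall : ∀ᶠ w in 𝓝 (0 : V), ‖exp (s • A) w‖ < 1 :=
    (exp (s • A)).continuous.norm.continuousAt.eventually_lt continuousAt_const (by simp)
  filter_upwards [self_mem_nhdsWithin, nhdsWithin_le_nhds hsmall] with w hw h
  exact ((hA.unitTime_lt_iff ha hw).2 h).le

theorem flowConjugacy_exp_smul_apply (hA : IsContracting A a) (ha : 0 < a) (B : V →L[ℝ] V)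
    (t : ℝ) (v : V) : flowConjugacy A B (exp (t • A) v) = exp (t • B) (flowConjugacy A B v) := by
  rcases eq_or_ne v 0 with rfl | hv
  · simp only [map_zero, flowConjugacy_zero]
  rw [flowConjugacy, flowConjugacy, hA.unitTime_exp_smul_apply ha hv, ← exp_add_smul_apply A,
    sub_add_cancel, ← exp_add_smul_apply B, neg_sub, sub_eq_add_neg]

theorem unitTime_flowConjugacy (hA : IsContracting A a) (ha : 0 < a) (hB : IsContracting B b)
    (hb : 0 < b) {v : V} (hv : v ≠ 0) : unitTime B (flowConjugacy A B v) = unitTime A v := by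
  refine hB.unitTime_eq hb (exp_smul_apply_ne_zero B _ (exp_smul_apply_ne_zero A _ hv)) ?_
  rw [exp_smul_apply_exp_neg_smul_apply, hA.norm_exp_unitTime_smul_apply ha hv]

theorem flowConjugacy_flowConjugacy (hA : IsContracting A a) (ha : 0 < a)
    (hB : IsContracting B b) (hb : 0 < b) (v : V) :
    flowConjugacy B A (flowConjugacy A B v) = v := by
  rcases eq_or_ne v 0 with rfl | hv
  · simp only [flowConjugacy_zero]
  rw [flowConjugacy, hA.unitTime_flowConjugacy ha hB hb hv, flowConjugacy,
    exp_smul_apply_exp_neg_smul_apply, exp_neg_smul_apply_exp_smul_apply]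

theorem norm_flowConjugacy_le (hA : IsContracting A a) (ha : 0 < a) (hB : IsContracting B b)
    {v : V} (hv : v ≠ 0) (hτ : unitTime A v ≤ 0) :
    ‖flowConjugacy A B v‖ ≤ Real.exp (b * unitTime A v) := by
  calc ‖flowConjugacy A B v‖
      ≤ Real.exp (-b * -unitTime A v) * ‖exp (unitTime A v • A) v‖ := hB _ (neg_nonneg.2 hτ) _
    _ = Real.exp (b * unitTime A v) := by
        rw [hA.norm_exp_unitTime_smul_apply ha hv, mul_one, neg_mul_neg]

theorem continuous_flowConjugacy (hA : IsContracting A a) (ha : 0 < a)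
    (hB : IsContracting B b) (hb : 0 < b) : Continuous (flowConjugacy A B) := by
  refine continuous_iff_continuousAt.2 fun v => ?_
  rcases eq_or_ne v 0 with rfl | hv
  · rw [← continuousWithinAt_compl_self, ContinuousWithinAt, flowConjugacy_zero]
    have hτ := hA.tendsto_unitTime_nhdsNE_zero ha
    refine squeeze_zero_norm' ?_ (Real.tendsto_exp_atBot.comp (hτ.const_mul_atBot hb))
    filter_upwards [self_mem_nhdsWithin, hτ.eventually_le_atBot 0] with w hw hτw
    exact hA.norm_flowConjugacy_le ha hB hw hτw
  · have hτ := hA.continuousAt_unitTime ha hv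
    exact ((continuous_exp_smul B).continuousAt.comp hτ.neg).clm_apply
      (((continuous_exp_smul A).continuousAt.comp hτ).clm_apply continuousAt_id)

noncomputable def flowConjugacyHomeomorph (hA : IsContracting A a) (ha : 0 < a)
    (hB : IsContracting B b) (hb : 0 < b) : V ≃ₜ V where
  toFun := flowConjugacy A B
  invFun := flowConjugacy B A
  left_inv := hA.flowConjugacy_flowConjugacy ha hB hb
  right_inv := hB.flowConjugacy_flowConjugacy hb hA ha
  continuous_toFun := hA.continuous_flowConjugacy ha hB hb
  continuous_invFun := hB.continuous_flowConjugacy hb hA ha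

end IsContracting

end LinearFlow

/-- Two hyperbolic linear flows on a finite-dimensional real normed space are
topologically conjugate. -/
theorem stmt4 {V : Type*} [NormedAddCommGroup V] [NormedSpace ℝ V]
    [FiniteDimensional ℝ V]
    (A B : V →L[ℝ] V) (a b : ℝ) (ha : 0 < a) (hb : 0 < b)
    (hypA : ∀ t : ℝ, 0 ≤ t → ∀ v : V, ‖exp (t • A) v‖ ≤ Real.exp (-a * t) * ‖v‖)
    (hypB : ∀ t : ℝ, 0 ≤ t → ∀ v : V, ‖exp (t • B) v‖ ≤ Real.exp (-b * t) * ‖v‖) :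
    ∃ ψ : V ≃ₜ V, ∀ (t : ℝ) (v : V), ψ (exp (t • A) v) = exp (t • B) (ψ v) := by
  have hA : IsContracting A a := hypA
  have hB : IsContracting B b := hypB
  exact ⟨hA.flowConjugacyHomeomorph ha hB hb, hA.flowConjugacy_exp_smul_apply ha B⟩
end

section
/- Let A, B be real 2×2 matrices satisfying (a-d)² + bc ≤ 0 for their respective entries, and suppose tr(A) < 0 and tr(B) < 0. Then the flows X ↦ exp(tA) X and X ↦ exp(tB) X on GL(2,ℝ) are topologically conjugate. -/
/-!
Since `det (exp (t • A)) = exp (t * tr A)`, the function `τ_A X = log |det X| / tr A` increases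
by exactly `t` along the flow `X ↦ exp (t • A) * X` as soon as `tr A ≠ 0`. Hence
`X ↦ (τ_A X, exp (-τ_A X • A) * X)` identifies `GL` with `ℝ × {|det| = 1}` and turns the flow
of `A` into translation of the first factor. Composing this trivialization for `A` with the
inverse of the one for `B` conjugates the two flows.
-/

open NormedSpace

namespace Matrix
variable {ι : Type*} [Fintype ι] [DecidableEq ι]

open Polynomial in
theorem hasDerivAt_det_one_add_smul (A : Matrix ι ι ℝ) :
    HasDerivAt (fun h : ℝ => (1 + h • A).det) A.trace 0 := by
  have e : (fun h : ℝ => (1 + h • A).det) = fun h => (det (1 + (X : ℝ[X]) • A.map C)).eval h :=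
    _root_.funext fun r => by simp [eval_det, ← smul_eq_mul_diagonal]
  rw [e, ← derivative_det_one_add_X_smul]
  exact Polynomial.hasDerivAt _ 0

theorem exp_smul_add (s t : ℝ) (A : Matrix ι ι ℝ) :
    exp ((s + t) • A) = exp (s • A) * exp (t • A) := by
  rw [add_smul]
  exact exp_add_of_commute _ _ (((Commute.refl A).smul_left s).smul_right t)

section
attribute [local instance] Matrix.linftyOpNormedRing Matrix.linftyOpNormedAlgebra

theorem differentiable_det : Differentiable ℝ (det : Matrix ι ι ℝ → ℝ) := by
  have hentry (i j : ι) : Differentiable ℝ (fun M : Matrix ι ι ℝ => M i j) :=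
    (LinearMap.toContinuousLinearMap <|
      (LinearMap.proj j).comp (LinearMap.proj (R := ℝ) (φ := fun _ : ι => ι → ℝ) i)).differentiable
  rw [show (det : Matrix ι ι ℝ → ℝ) =
      fun M => ∑ σ : Equiv.Perm ι, Equiv.Perm.sign σ • ∏ i, M (σ i) i from _root_.funext det_apply]
  fun_prop

theorem hasDerivAt_det_exp_smul_zero (A : Matrix ι ι ℝ) :
    HasDerivAt (fun h : ℝ => (exp (h • A)).det) A.trace 0 := by
  have hdet := (differentiable_det (ι := ι) 1).hasFDerivAt
  have hline := (((hasDerivAt_id (0 : ℝ)).smul_const A).const_add 1).congr_deriv (one_smul ℝ A)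
  have hexp := hasDerivAt_exp_smul_const (𝕂 := ℝ) A 0
  rw [zero_smul, exp_zero, one_mul] at hexp
  -- `1 + h • A` and `exp (h • A)` agree to first order at `0`, and `det` is differentiable at `1`.
  have htr := (hdet.comp_hasDerivAt_of_eq 0 hline (by simp)).unique
    (hasDerivAt_det_one_add_smul A)
  exact htr ▸ hdet.comp_hasDerivAt_of_eq 0 hexp (by simp)

theorem hasDerivAt_det_exp_smul (A : Matrix ι ι ℝ) (t : ℝ) :
    HasDerivAt (fun u : ℝ => (exp (u • A)).det) ((exp (t • A)).det * A.trace) t := by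
  have h := ((sub_self t ▸ hasDerivAt_det_exp_smul_zero A).comp_sub_const t t).const_mul
    (exp (t • A)).det
  refine h.congr_of_eventuallyEq (.of_forall fun u => ?_)
  dsimp only
  rw [← det_mul, ← exp_smul_add, add_sub_cancel]

theorem continuous_exp_smul (A : Matrix ι ι ℝ) : Continuous fun t : ℝ => exp (t • A) :=
  (differentiable_exp_smul_const ℝ A).continuous

end

theorem det_exp (A : Matrix ι ι ℝ) : (exp A).det = Real.exp A.trace := by
  have hg : ∀ t, HasDerivAt (fun u => (exp (u • A)).det * Real.exp (-(u * A.trace))) 0 t :=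
    fun t => ((hasDerivAt_det_exp_smul A t).mul
      ((hasDerivAt_mul_const A.trace).neg.exp)).congr_deriv (by ring)
  have hconst := is_const_of_deriv_eq_zero (fun t => (hg t).differentiableAt)
    (fun t => (hg t).deriv) 1 0
  simp only [one_smul, one_mul, zero_smul, exp_zero, det_one, zero_mul, neg_zero,
    Real.exp_zero, mul_one] at hconst
  rwa [Real.exp_neg, mul_inv_eq_one₀ (Real.exp_pos _).ne'] at hconst

namespace GeneralLinearGroup

noncomputable section

def expSMul (A : Matrix ι ι ℝ) (t : ℝ) : GL ι ℝ :=
  ⟨exp (t • A), exp (-t • A), by rw [← exp_smul_add]; simp, by rw [← exp_smul_add]; simp⟩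

@[simp]
theorem coe_expSMul (A : Matrix ι ι ℝ) (t : ℝ) : (expSMul A t : Matrix ι ι ℝ) = exp (t • A) := rfl

theorem expSMul_add (A : Matrix ι ι ℝ) (s t : ℝ) :
    expSMul A (s + t) = expSMul A s * expSMul A t :=
  Units.ext (exp_smul_add s t A)

theorem expSMul_neg (A : Matrix ι ι ℝ) (t : ℝ) : expSMul A (-t) = (expSMul A t)⁻¹ :=
  Units.ext (by simp [expSMul])

@[fun_prop]
theorem continuous_expSMul (A : Matrix ι ι ℝ) : Continuous (expSMul A) := by
  refine Units.continuous_iff.mpr ⟨continuous_exp_smul A, ?_⟩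
  simp only [← expSMul_neg, coe_expSMul]
  exact (continuous_exp_smul A).comp continuous_neg

def flowTime (A : Matrix ι ι ℝ) (X : GL ι ℝ) : ℝ :=
  Real.log |(X : Matrix ι ι ℝ).det| / A.trace

@[fun_prop]
theorem continuous_flowTime (A : Matrix ι ι ℝ) : Continuous (flowTime A) :=
  ((continuous_id.matrix_det.comp Units.continuous_val).abs.log
    fun X => abs_ne_zero.mpr (det_ne_zero X)).div_const _

theorem log_abs_det_expSMul_mul (A : Matrix ι ι ℝ) (t : ℝ) (X : GL ι ℝ) :
    Real.log |((expSMul A t * X : GL ι ℝ) : Matrix ι ι ℝ).det| =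
      t * A.trace + Real.log |(X : Matrix ι ι ℝ).det| := by
  rw [Units.val_mul, det_mul, coe_expSMul, det_exp, trace_smul, smul_eq_mul, abs_mul,
    Real.abs_exp, Real.log_mul (Real.exp_ne_zero _) (abs_ne_zero.mpr (det_ne_zero X)), Real.log_exp]

theorem flowTime_expSMul_mul {A : Matrix ι ι ℝ} (hA : A.trace ≠ 0) (t : ℝ) (X : GL ι ℝ) :
    flowTime A (expSMul A t * X) = t + flowTime A X := by
  rw [flowTime, log_abs_det_expSMul_mul, add_div, mul_div_cancel_right₀ t hA, flowTime]

theorem log_abs_det_expSMul_neg_flowTime_mul {A : Matrix ι ι ℝ} (hA : A.trace ≠ 0)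
    (X : GL ι ℝ) :
    Real.log |((expSMul A (-flowTime A X) * X : GL ι ℝ) : Matrix ι ι ℝ).det| = 0 := by
  rw [log_abs_det_expSMul_mul, flowTime, neg_mul, div_mul_cancel₀ _ hA, neg_add_cancel]

def flowConj (A B : Matrix ι ι ℝ) (X : GL ι ℝ) : GL ι ℝ :=
  expSMul B (flowTime A X) * (expSMul A (-flowTime A X) * X)

theorem flowTime_flowConj {A B : Matrix ι ι ℝ} (hA : A.trace ≠ 0) (hB : B.trace ≠ 0)
    (X : GL ι ℝ) : flowTime B (flowConj A B X) = flowTime A X := by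
  rw [flowConj, flowTime_expSMul_mul hB, add_eq_left, flowTime,
    log_abs_det_expSMul_neg_flowTime_mul hA, zero_div]

theorem flowConj_flowConj {A B : Matrix ι ι ℝ} (hA : A.trace ≠ 0) (hB : B.trace ≠ 0)
    (X : GL ι ℝ) : flowConj B A (flowConj A B X) = X := by
  rw [flowConj, flowTime_flowConj hA hB, flowConj, expSMul_neg, expSMul_neg]
  group

theorem continuous_flowConj (A B : Matrix ι ι ℝ) : Continuous (flowConj A B) := by
  unfold flowConj
  fun_prop

theorem flowConj_expSMul_mul {A : Matrix ι ι ℝ} (hA : A.trace ≠ 0) (B : Matrix ι ι ℝ) (t : ℝ)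
    (X : GL ι ℝ) : flowConj A B (expSMul A t * X) = expSMul B t * flowConj A B X := by
  simp only [flowConj, flowTime_expSMul_mul hA, expSMul_neg, expSMul_add]
  group

def flowConjHomeomorph {A B : Matrix ι ι ℝ} (hA : A.trace ≠ 0) (hB : B.trace ≠ 0) :
    GL ι ℝ ≃ₜ GL ι ℝ where
  toFun := flowConj A B
  invFun := flowConj B A
  left_inv := flowConj_flowConj hA hB
  right_inv := flowConj_flowConj hB hA
  continuous_toFun := continuous_flowConj A B
  continuous_invFun := continuous_flowConj B A

end

end GeneralLinearGroup
end Matrix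

theorem stmt11_general (A B : Matrix (Fin 2) (Fin 2) ℝ)
    (htrA : A.trace < 0) (htrB : B.trace < 0) :
    ∃ φ : GL (Fin 2) ℝ ≃ₜ GL (Fin 2) ℝ, ∀ (t : ℝ) (X Y : GL (Fin 2) ℝ),
      (Y : Matrix (Fin 2) (Fin 2) ℝ) = exp (t • A) * (X : Matrix (Fin 2) (Fin 2) ℝ) →
      (φ Y : Matrix (Fin 2) (Fin 2) ℝ) = exp (t • B) * (φ X : Matrix (Fin 2) (Fin 2) ℝ) := by
  open Matrix.GeneralLinearGroup in
  refine ⟨flowConjHomeomorph htrA.ne htrB.ne, fun t X Y hY => ?_⟩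
  obtain rfl : Y = expSMul A t * X := Units.ext hY
  exact congrArg Units.val (flowConj_expSMul_mul htrA.ne B t X)

/-- Two real 2×2 matrices satisfying `(a-d)² + bc ≤ 0` and having negative trace
generate topologically conjugate flows on `GL(2,ℝ)`. -/
theorem stmt11 (A B : Matrix (Fin 2) (Fin 2) ℝ)
    (hA : (A 0 0 - A 1 1) ^ 2 + A 0 1 * A 1 0 ≤ 0)
    (hB : (B 0 0 - B 1 1) ^ 2 + B 0 1 * B 1 0 ≤ 0)
    (htrA : A.trace < 0) (htrB : B.trace < 0) :
    ∃ φ : GL (Fin 2) ℝ ≃ₜ GL (Fin 2) ℝ, ∀ (t : ℝ) (X Y : GL (Fin 2) ℝ),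
      (Y : Matrix (Fin 2) (Fin 2) ℝ) = exp (t • A) * (X : Matrix (Fin 2) (Fin 2) ℝ) →
      (φ Y : Matrix (Fin 2) (Fin 2) ℝ) = exp (t • B) * (φ X : Matrix (Fin 2) (Fin 2) ℝ) :=
  stmt11_general A B htrA htrB
end

section
/- Let V be a real normed vector space and A a continuous linear operator such that ‖exp(tA) v‖ ≤ exp(-a t)‖v‖ for all t ≥ 0, some a > 0. If (vₙ) is a sequence in V \ {0} with vₙ → 0, then the crossing times tₙ = t_A(vₙ) (defined by ‖exp(tₙ A) vₙ‖ = 1) tend to -∞. -/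
open NormedSpace Filter

/-!
Once `‖v‖ < 1`, the contraction estimate forces the crossing time `t = t_A(v)` to be
nonpositive, and the growth bound `‖exp (t • A)‖ ≤ exp (|t| ‖A‖)` then gives `t ‖A‖ ≤ log ‖v‖`.
Hence `t_A(vₙ) ≤ log ‖vₙ‖ / (‖A‖ + 1) → -∞` (the `+ 1` covers `A = 0`).
-/

theorem norm_exp_le_exp_norm_of_norm_one_le {𝔸 : Type*} [NormedRing 𝔸] [NormedAlgebra ℝ 𝔸]
    [CompleteSpace 𝔸] (h1 : ‖(1 : 𝔸)‖ ≤ 1) (x : 𝔸) : ‖exp x‖ ≤ Real.exp ‖x‖ := by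
  have hpow : ∀ n : ℕ, ‖x ^ n‖ ≤ ‖x‖ ^ n
    | 0 => by simpa using h1
    | n + 1 => norm_pow_le' x n.succ_pos
  have hterm : ∀ n : ℕ, ‖(n.factorial⁻¹ : ℝ) • x ^ n‖ ≤ ‖x‖ ^ n / n.factorial := fun n => by
    rw [norm_smul, norm_inv, Real.norm_natCast, inv_mul_eq_div]
    gcongr
    exact hpow n
  calc ‖exp x‖ = ‖∑' n : ℕ, (n.factorial⁻¹ : ℝ) • x ^ n‖ := by rw [exp_eq_tsum ℝ]
    _ ≤ ∑' n : ℕ, ‖(n.factorial⁻¹ : ℝ) • x ^ n‖ :=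
      norm_tsum_le_tsum_norm (norm_expSeries_summable' x)
    _ ≤ ∑' n : ℕ, ‖x‖ ^ n / n.factorial :=
      (norm_expSeries_summable' x).tsum_le_tsum hterm (Real.summable_pow_div_factorial _)
    _ = Real.exp ‖x‖ := by rw [Real.exp_eq_exp_ℝ, exp_eq_tsum_div]

theorem ContinuousLinearMap.norm_exp_apply_le {V : Type*} [NormedAddCommGroup V]
    [NormedSpace ℝ V] [CompleteSpace V] (B : V →L[ℝ] V) (w : V) :
    ‖exp B w‖ ≤ Real.exp ‖B‖ * ‖w‖ :=
  (exp B).le_opNorm w |>.trans <| by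
    gcongr
    exact norm_exp_le_exp_norm_of_norm_one_le (ContinuousLinearMap.norm_id_le) B

section CrossingTime

variable {V : Type*} [NormedAddCommGroup V] [NormedSpace ℝ V] {A : V →L[ℝ] V} {t : ℝ} {w : V}

theorem nonpos_of_norm_exp_smul_apply_eq_one {a : ℝ} (ha : 0 ≤ a)
    (hyp : ∀ t : ℝ, 0 ≤ t → ∀ v : V, ‖exp (t • A) v‖ ≤ Real.exp (-a * t) * ‖v‖)
    (h : ‖exp (t • A) w‖ = 1) (hw : ‖w‖ < 1) : t ≤ 0 := by
  by_contra! ht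
  have hdecay : Real.exp (-a * t) ≤ 1 := Real.exp_le_one_iff.mpr (by nlinarith)
  have := hyp t ht.le w
  rw [h] at this
  nlinarith [norm_nonneg w]

theorem mul_norm_le_log_norm_of_norm_exp_smul_apply_eq_one [CompleteSpace V]
    (hw : w ≠ 0) (ht : t ≤ 0) (h : ‖exp (t • A) w‖ = 1) : t * ‖A‖ ≤ Real.log ‖w‖ := by
  have hw' : 0 < ‖w‖ := norm_pos_iff.mpr hw
  have hgrowth : 1 ≤ Real.exp (-t * ‖A‖) * ‖w‖ := by
    rw [← h, ← abs_of_nonpos ht, ← Real.norm_eq_abs, ← norm_smul]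
    exact (t • A).norm_exp_apply_le w
  have := Real.log_le_log one_pos hgrowth
  rw [Real.log_one, Real.log_mul (Real.exp_pos _).ne' hw'.ne', Real.log_exp] at this
  linarith

end CrossingTime

/-- If `vₙ` are nonzero vectors with `vₙ → 0`, then the unit-sphere crossing times
`t_A(vₙ)` tend to `-∞`. -/
theorem stmt17 {V : Type*} [NormedAddCommGroup V] [NormedSpace ℝ V] [CompleteSpace V]
    (A : V →L[ℝ] V) (a : ℝ) (ha : 0 < a)
    (hyp : ∀ t : ℝ, 0 ≤ t → ∀ v : V, ‖exp (t • A) v‖ ≤ Real.exp (-a * t) * ‖v‖)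
    (tA : V → ℝ) (htA : ∀ v : V, v ≠ 0 → ‖exp (tA v • A) v‖ = 1)
    (v : ℕ → V) (hv : ∀ k, v k ≠ 0) (hlim : Tendsto v atTop (nhds 0)) :
    Tendsto (fun k => tA (v k)) atTop atBot := by
  have hC : 0 < ‖A‖ + 1 := by positivity
  have hnorm : Tendsto (fun k => ‖v k‖) atTop (nhdsWithin 0 (Set.Ioi 0)) :=
    tendsto_nhdsWithin_of_tendsto_nhds_of_eventually_within _ (by simpa using hlim.norm)
      (Eventually.of_forall fun k => norm_pos_iff.mpr (hv k))
  have hlog : Tendsto (fun k => Real.log ‖v k‖ / (‖A‖ + 1)) atTop atBot :=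
    (Real.tendsto_log_nhdsGT_zero.comp hnorm).atBot_div_const hC
  refine tendsto_atBot_mono' atTop ?_ hlog
  filter_upwards [(tendsto_nhds_of_tendsto_nhdsWithin hnorm).eventually_lt_const one_pos]
    with k hk
  have ht := nonpos_of_norm_exp_smul_apply_eq_one ha.le hyp (htA _ (hv k)) hk
  have hbound := mul_norm_le_log_norm_of_norm_exp_smul_apply_eq_one (hv k) ht (htA _ (hv k))
  rw [le_div_iff₀ hC]
  nlinarith
end

section
/- Let V be a real normed vector space and A, B hyperbolic continuous linear operators with constants a, b > 0 (‖exp(tA)v‖ ≤ exp(-at)‖v‖ and ‖exp(tB)v‖ ≤ exp(-bt)‖v‖ for t ≥ 0). Define ψ : V → V by ψ(0) = 0 and, for v ≠ 0, ψ(v) = exp(-t_A(v) B) · h₀(exp(t_A(v) A) v), where t_A(v) is the unit-sphere crossing time for A and h₀(w) = w/‖w‖. Then ψ is continuous at 0. -/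
/-!
If `‖exp (t A) v‖ = 1` with `‖v‖ < 1`, contraction under `A` forces `t < 0`, and since `exp (t A)`
expands by at most `exp (|t| ‖A‖)`, the crossing time satisfies `exp (t (‖A‖ + 1)) ≤ ‖v‖`.
Flowing along `B` for the positive time `-t` contracts the unit vector by `exp (b t)`, so
`‖ψ v‖ ≤ ‖v‖ ^ (b / (‖A‖ + 1))`.
-/

open NormedSpace Filter Topology

theorem NormedSpace.norm_exp_le_exp_norm {𝔸 : Type*} [NormedRing 𝔸] [NormedAlgebra ℝ 𝔸]
    [NormOneClass 𝔸] (x : 𝔸) : ‖exp x‖ ≤ Real.exp ‖x‖ := by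
  rw [exp_eq_tsum ℝ]
  refine tsum_of_norm_bounded (g := fun n => ‖x‖ ^ n / n.factorial) ?_ fun n => ?_
  · simpa [Real.exp_eq_exp_ℝ] using expSeries_div_hasSum_exp ‖x‖
  · rw [norm_smul, norm_inv, Real.norm_natCast, div_eq_inv_mul]
    gcongr
    exact norm_pow_le x n

section

variable {V : Type*} [NormedAddCommGroup V] [NormedSpace ℝ V]

theorem norm_exp_smul_apply_le (A : V →L[ℝ] V) (t : ℝ) (v : V) :
    ‖exp (t • A) v‖ ≤ Real.exp (|t| * ‖A‖) * ‖v‖ := by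
  nontriviality V
  calc ‖exp (t • A) v‖ ≤ ‖exp (t • A)‖ * ‖v‖ := (exp (t • A)).le_opNorm v
    _ ≤ Real.exp (|t| * ‖A‖) * ‖v‖ := by
      gcongr
      simpa [norm_smul] using norm_exp_le_exp_norm (t • A)

theorem neg_of_norm_exp_smul_apply_eq_one {A : V →L[ℝ] V} {a : ℝ} (ha : 0 ≤ a)
    (hA : ∀ t : ℝ, 0 ≤ t → ∀ v : V, ‖exp (t • A) v‖ ≤ Real.exp (-a * t) * ‖v‖)
    {t : ℝ} {v : V} (hv : ‖v‖ < 1) (h : ‖exp (t • A) v‖ = 1) : t < 0 := by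
  by_contra! ht
  have hcontract : Real.exp (-a * t) ≤ 1 := Real.exp_le_one_iff.2 (by nlinarith)
  have := (hA t ht v).trans (mul_le_of_le_one_left (norm_nonneg v) hcontract)
  linarith

/-- The rate is `‖A‖ + 1` rather than `‖A‖` so that it stays positive when `A = 0`. -/
theorem exp_mul_le_norm_of_norm_exp_smul_apply_eq_one (A : V →L[ℝ] V) {t : ℝ} {v : V}
    (ht : t ≤ 0) (h : ‖exp (t • A) v‖ = 1) : Real.exp (t * (‖A‖ + 1)) ≤ ‖v‖ := by
  have hgrowth : 1 ≤ Real.exp (-(t * (‖A‖ + 1))) * ‖v‖ :=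
    calc (1 : ℝ) = ‖exp (t • A) v‖ := h.symm
      _ ≤ Real.exp (|t| * ‖A‖) * ‖v‖ := norm_exp_smul_apply_le A t v
      _ ≤ Real.exp (-(t * (‖A‖ + 1))) * ‖v‖ := by
        gcongr
        rw [abs_of_nonpos ht]
        linarith
  rwa [Real.exp_neg, inv_mul_eq_div, one_le_div (Real.exp_pos _)] at hgrowth

theorem norm_exp_neg_smul_exp_smul_apply_le_rpow {A B : V →L[ℝ] V} {a b : ℝ} (ha : 0 ≤ a)
    (hb : 0 ≤ b)
    (hA : ∀ t : ℝ, 0 ≤ t → ∀ v : V, ‖exp (t • A) v‖ ≤ Real.exp (-a * t) * ‖v‖)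
    (hB : ∀ t : ℝ, 0 ≤ t → ∀ v : V, ‖exp (t • B) v‖ ≤ Real.exp (-b * t) * ‖v‖)
    {t : ℝ} {v : V} (hv : ‖v‖ < 1) (h : ‖exp (t • A) v‖ = 1) :
    ‖exp ((-t) • B) (exp (t • A) v)‖ ≤ ‖v‖ ^ (b / (‖A‖ + 1)) := by
  have ht := neg_of_norm_exp_smul_apply_eq_one ha hA hv h
  calc ‖exp ((-t) • B) (exp (t • A) v)‖ ≤ Real.exp (-b * -t) * 1 := by
        simpa [h] using hB (-t) (by linarith) (exp (t • A) v)
    _ = Real.exp (t * (‖A‖ + 1)) ^ (b / (‖A‖ + 1)) := by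
        rw [← Real.exp_mul]
        field_simp
    _ ≤ ‖v‖ ^ (b / (‖A‖ + 1)) := by
        gcongr
        exact exp_mul_le_norm_of_norm_exp_smul_apply_eq_one A ht.le h

end

theorem stmt19_general {V : Type*} [NormedAddCommGroup V] [NormedSpace ℝ V]
    (A B : V →L[ℝ] V) (a b : ℝ) (ha : 0 < a) (hb : 0 < b)
    (hypA : ∀ t : ℝ, 0 ≤ t → ∀ v : V, ‖exp (t • A) v‖ ≤ Real.exp (-a * t) * ‖v‖)
    (hypB : ∀ t : ℝ, 0 ≤ t → ∀ v : V, ‖exp (t • B) v‖ ≤ Real.exp (-b * t) * ‖v‖)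
    (tA : V → ℝ) (htA : ∀ v : V, v ≠ 0 → ‖exp (tA v • A) v‖ = 1)
    (ψ : V → V) (hψ0 : ψ 0 = 0)
    (hψ : ∀ v : V, v ≠ 0 →
      ψ v = exp ((-tA v) • B) (‖exp (tA v • A) v‖⁻¹ • exp (tA v • A) v)) :
    ContinuousAt ψ 0 := by
  have hc : 0 < b / (‖A‖ + 1) := by positivity
  have hbound : ∀ v : V, ‖v‖ < 1 → ‖ψ v‖ ≤ ‖v‖ ^ (b / (‖A‖ + 1)) := by
    intro v hv
    rcases eq_or_ne v 0 with rfl | hv0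
    · simp [hψ0, Real.zero_rpow hc.ne']
    rw [hψ v hv0, htA v hv0, inv_one, one_smul]
    exact norm_exp_neg_smul_exp_smul_apply_le_rpow ha.le hb.le hypA hypB hv (htA v hv0)
  have hlim : Tendsto (fun v : V => ‖v‖ ^ (b / (‖A‖ + 1))) (𝓝 0) (𝓝 0) := by
    simpa [Real.zero_rpow hc.ne'] using tendsto_norm_zero.rpow_const (Or.inr hc.le)
  rw [ContinuousAt, hψ0]
  refine squeeze_zero_norm' ?_ hlim
  filter_upwards [Metric.ball_mem_nhds (0 : V) one_pos] with v hv
  exact hbound v (mem_ball_zero_iff.1 hv)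

/-- The conjugating map `ψ`, defined by `ψ(0) = 0` and
`ψ(v) = exp(-t_A(v) B) h₀(exp(t_A(v) A) v)` for `v ≠ 0`, is continuous at `0`. -/
theorem stmt19 {V : Type*} [NormedAddCommGroup V] [NormedSpace ℝ V] [CompleteSpace V]
    (A B : V →L[ℝ] V) (a b : ℝ) (ha : 0 < a) (hb : 0 < b)
    (hypA : ∀ t : ℝ, 0 ≤ t → ∀ v : V, ‖exp (t • A) v‖ ≤ Real.exp (-a * t) * ‖v‖)
    (hypB : ∀ t : ℝ, 0 ≤ t → ∀ v : V, ‖exp (t • B) v‖ ≤ Real.exp (-b * t) * ‖v‖)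
    (tA : V → ℝ) (htA : ∀ v : V, v ≠ 0 → ‖exp (tA v • A) v‖ = 1)
    (ψ : V → V) (hψ0 : ψ 0 = 0)
    (hψ : ∀ v : V, v ≠ 0 →
      ψ v = exp ((-tA v) • B) (‖exp (tA v • A) v‖⁻¹ • exp (tA v • A) v)) :
    ContinuousAt ψ 0 :=
  stmt19_general A B a b ha hb hypA hypB tA htA ψ hψ0 hψ
end
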